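/- J_α(X;Y) is continuous in α at α = 1, with J_1(X;Y) = I(X;Y): lim_{α→1} J_α(X;Y) = I(X;Y). -/

import Mathlib

open scoped ENNReal BigOperators
open Finset

/-- Kullback-Leibler divergence between two PMFs on a finite set, valued in `EReal`
(`⊤` when `P` is not absolutely continuous w.r.t. `Q`). -/
noncomputable def klDiv {X : Type*} [Fintype X] (P Q : X → ℝ≥0∞) : EReal :=
  if ∀ x, Q x = 0 → P x = 0 then
    (((∑ x, (P x).toReal * Real.log ((P x).toReal / (Q x).toReal)) : ℝ) : EReal)
  else ⊤

/-- Rényi divergence of order `α` (KL divergence at `α = 1`).  The ENNReal conventions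
`0 * ⊤ = 0` and `0 ^ y = ⊤` for `y < 0` encode `0/0 = 0` and `p/0 = ∞`. -/
noncomputable def renyiDiv {X : Type*} [Fintype X] (α : ℝ) (P Q : X → ℝ≥0∞) : EReal :=
  if α = 1 then klDiv P Q
  else (((α - 1)⁻¹ : ℝ) : EReal) * ENNReal.log (∑ x, P x ^ α * Q x ^ (1 - α))

/-- Relative α-entropy (Sundaresan's divergence); KL divergence at `α = 1`. -/
noncomputable def relAlphaEnt {X : Type*} [Fintype X] (α : ℝ) (P Q : X → ℝ≥0∞) : EReal :=
  if α = 1 then klDiv P Q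
  else ((α / (1 - α) : ℝ) : EReal) * ENNReal.log (∑ x, P x * Q x ^ (α - 1))
    + ENNReal.log (∑ x, Q x ^ α)
    - (((1 - α)⁻¹ : ℝ) : EReal) * ENNReal.log (∑ x, P x ^ α)

/-- The set of PMFs on a finite type, as a subtype. -/
def PMFon (X : Type*) [Fintype X] : Type _ := {p : X → ℝ≥0∞ // ∑ x, p x = 1}

noncomputable def margX {X Y : Type*} [Fintype X] [Fintype Y] (P : X × Y → ℝ≥0∞) : X → ℝ≥0∞ :=
  fun x => ∑ y, P (x, y)

noncomputable def margY {X Y : Type*} [Fintype X] [Fintype Y] (P : X × Y → ℝ≥0∞) : Y → ℝ≥0∞ :=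
  fun y => ∑ x, P (x, y)

/-- Mutual information of a joint PMF. -/
noncomputable def mutualInfo {X Y : Type*} [Fintype X] [Fintype Y] (P : X × Y → ℝ≥0∞) : EReal :=
  klDiv P (fun p => margX P p.1 * margY P p.2)

/-- The dependence measure `J_α`. -/
noncomputable def Jalpha {X Y : Type*} [Fintype X] [Fintype Y] (α : ℝ) (P : X × Y → ℝ≥0∞) :
    EReal :=
  ⨅ (Q : PMFon X × PMFon Y), renyiDiv α P (fun p => Q.1.1 p.1 * Q.2.1 p.2)

/-- The dependence measure `K_α`. -/
noncomputable def Kalpha {X Y : Type*} [Fintype X] [Fintype Y] (α : ℝ) (P : X × Y → ℝ≥0∞) :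
    EReal :=
  ⨅ (Q : PMFon X × PMFon Y), relAlphaEnt α P (fun p => Q.1.1 p.1 * Q.2.1 p.2)

/-- Rényi entropy of order `β`. -/
noncomputable def renyiEnt {X : Type*} [Fintype X] (β : ℝ) (P : X → ℝ≥0∞) : EReal :=
  if β = 1 then (((∑ x, (P x).toReal * Real.log (P x).toReal⁻¹ : ℝ)) : EReal)
  else (((1 - β)⁻¹ : ℝ) : EReal) * ENNReal.log (∑ x, P x ^ β)

/-- Min-entropy. -/
noncomputable def minEnt {X : Type*} [Fintype X] (P : X → ℝ≥0∞) : EReal :=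
  - ENNReal.log (⨆ x, P x)

/-!
Write `L = log (P / Q)` for the log-likelihood ratio, so that
`D_α(P‖Q) = (α - 1)⁻¹ log 𝔼_P[exp ((α - 1) L)]` and `KL(P‖Q) = 𝔼_P[L]`. Jensen's inequality gives
`D_α ≥ KL` for `α > 1`, and `exp x ≤ 1 + x + x²` on `|x| ≤ 1` gives `|D_α - KL| ≤ |α - 1| M²`
as soon as `|L| ≤ M` on the support of `P`.

By the chain rule `KL(P‖Q₁Q₂) = I(X;Y) + KL(P_X‖Q₁) + KL(P_Y‖Q₂)`, every product `Q₁Q₂` has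
`KL(P‖Q₁Q₂) ≥ I(X;Y)`; this gives `J_1 = I` and the lower bound for `α > 1`. The upper bound comes
from `Q = P_X P_Y`, whose log-likelihood ratio is bounded. For `α < 1` the lower bound has to be
uniform in `Q`: replacing each `Qᵢ` by the mixture `s Qᵢ + (1 - s) Pᵢ` raises `D_α(P‖·)` by at
most `-2 log s`, and bounds `L` in terms of `s` and `P` only.
-/

open Filter Topology

section WeightedExp

variable {ι : Type*} [Fintype ι] {w L : ι → ℝ}

theorem sum_mul_exp_pos (hw : ∀ i, 0 ≤ w i) (hw1 : ∑ i, w i = 1) (f : ι → ℝ) :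
    0 < ∑ i, w i * Real.exp (f i) := by
  obtain ⟨i, -, hi⟩ := Finset.exists_lt_of_sum_lt (s := Finset.univ) (f := fun _ => (0 : ℝ))
    (g := w) (by simp [hw1])
  exact Finset.sum_pos' (fun j _ => mul_nonneg (hw j) (Real.exp_pos _).le)
    ⟨i, Finset.mem_univ _, mul_pos hi (Real.exp_pos _)⟩

theorem mul_sum_le_log_sum_mul_exp (hw : ∀ i, 0 ≤ w i) (hw1 : ∑ i, w i = 1) (t : ℝ) :
    t * ∑ i, w i * L i ≤ Real.log (∑ i, w i * Real.exp (t * L i)) := by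
  rw [Real.le_log_iff_exp_le (sum_mul_exp_pos hw hw1 _), Finset.mul_sum]
  have := convexOn_exp.map_sum_le (t := Finset.univ) (p := fun i => t * L i)
    (fun i _ => hw i) hw1 (fun _ _ => Set.mem_univ _)
  simpa only [smul_eq_mul, mul_left_comm t] using this

theorem log_sum_mul_exp_le (hw : ∀ i, 0 ≤ w i) (hw1 : ∑ i, w i = 1) {M t : ℝ}
    (hL : ∀ i, w i ≠ 0 → |L i| ≤ M) (ht : |t| * M ≤ 1) :
    Real.log (∑ i, w i * Real.exp (t * L i)) ≤ t * ∑ i, w i * L i + t ^ 2 * M ^ 2 := by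
  have hterm : ∀ i, w i * Real.exp (t * L i) ≤ w i * (1 + t * L i + t ^ 2 * M ^ 2) := by
    intro i
    rcases eq_or_ne (w i) 0 with h | h
    · simp [h]
    have htL : |t * L i| ≤ |t| * M := by
      rw [abs_mul]; exact mul_le_mul_of_nonneg_left (hL i h) (abs_nonneg t)
    have hsq : (t * L i) ^ 2 ≤ t ^ 2 * M ^ 2 := by
      rw [← sq_abs, ← sq_abs t, ← mul_pow]
      exact pow_le_pow_left₀ (abs_nonneg _) htL 2
    have := (abs_le.1 (Real.abs_exp_sub_one_sub_id_le (htL.trans ht))).2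
    exact mul_le_mul_of_nonneg_left (by linarith) (hw i)
  have hsum : ∑ i, w i * (1 + t * L i + t ^ 2 * M ^ 2) =
      1 + t * ∑ i, w i * L i + t ^ 2 * M ^ 2 := by
    simp only [mul_add, mul_one, Finset.sum_add_distrib, ← Finset.sum_mul, hw1, one_mul,
      Finset.mul_sum, mul_left_comm (w _) t]
  calc Real.log (∑ i, w i * Real.exp (t * L i))
      ≤ ∑ i, w i * Real.exp (t * L i) - 1 :=
        Real.log_le_sub_one_of_pos (sum_mul_exp_pos hw hw1 _)
    _ ≤ ∑ i, w i * (1 + t * L i + t ^ 2 * M ^ 2) - 1 :=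
        sub_le_sub_right (Finset.sum_le_sum fun i _ => hterm i) 1
    _ = t * ∑ i, w i * L i + t ^ 2 * M ^ 2 := by rw [hsum]; ring

theorem abs_inv_mul_log_sum_mul_exp_sub_le (hw : ∀ i, 0 ≤ w i) (hw1 : ∑ i, w i = 1) {M t : ℝ}
    (hL : ∀ i, w i ≠ 0 → |L i| ≤ M) (ht0 : t ≠ 0) (ht : |t| * M ≤ 1) :
    |t⁻¹ * Real.log (∑ i, w i * Real.exp (t * L i)) - ∑ i, w i * L i| ≤ |t| * M ^ 2 := by
  have hlo := mul_sum_le_log_sum_mul_exp (L := L) hw hw1 t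
  have hhi := log_sum_mul_exp_le hw hw1 hL ht
  have hid : t⁻¹ * Real.log (∑ i, w i * Real.exp (t * L i)) - ∑ i, w i * L i =
      t⁻¹ * (Real.log (∑ i, w i * Real.exp (t * L i)) - t * ∑ i, w i * L i) := by
    field_simp
  rw [hid, abs_mul, abs_inv, abs_of_nonneg (sub_nonneg.2 hlo), inv_mul_le_iff₀ (abs_pos.2 ht0),
    ← mul_assoc, ← sq, sq_abs]
  linarith

theorem sum_mul_log_div_nonneg {p q : ι → ℝ} (hp : ∀ i, 0 ≤ p i) (hq : ∀ i, 0 ≤ q i)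
    (hpq : ∀ i, q i = 0 → p i = 0) (hsum : ∑ i, q i ≤ ∑ i, p i) :
    0 ≤ ∑ i, p i * Real.log (p i / q i) := by
  have hterm : ∀ i, p i - q i ≤ p i * Real.log (p i / q i) := by
    intro i
    rcases (hp i).eq_or_lt with h | h
    · simp [← h, hq i]
    have hqi : 0 < q i := (hq i).lt_of_ne' fun h0 => h.ne' (hpq i h0)
    have := Real.one_sub_inv_le_log_of_pos (div_pos h hqi)
    rw [inv_div] at this
    calc p i - q i = p i * (1 - q i / p i) := by field_simp
      _ ≤ _ := mul_le_mul_of_nonneg_left this h.le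
  calc 0 ≤ ∑ i, (p i - q i) := by rw [Finset.sum_sub_distrib]; linarith
    _ ≤ _ := Finset.sum_le_sum fun i _ => hterm i

end WeightedExp

theorem abs_log_div_le {a p q : ℝ} (ha0 : 0 < a) (ha1 : a ≤ 1) (hp0 : 0 < p) (hp1 : p ≤ 1)
    (hq1 : q ≤ 1) (hq : a * p ^ 2 ≤ q) : |Real.log (p / q)| ≤ -Real.log a - 2 * Real.log p := by
  have hq0 : 0 < q := lt_of_lt_of_le (by positivity) hq
  have hlogq : Real.log a + 2 * Real.log p ≤ Real.log q := by
    have := Real.log_le_log (by positivity) hq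
    rwa [Real.log_mul ha0.ne' (by positivity), Real.log_pow, Nat.cast_ofNat] at this
  have := Real.log_nonpos hq0.le hq1
  have := Real.log_nonpos hp0.le hp1
  have := Real.log_nonpos ha0.le ha1
  rw [Real.log_div hp0.ne' hq0.ne', abs_le]
  constructor <;> linarith

theorem eventually_abs_sub_mul_le (a M ε : ℝ) (hε : 0 < ε) :
    ∀ᶠ x in 𝓝 a, |x - a| * M ≤ 1 ∧ |x - a| * M ^ 2 ≤ ε := by
  have h : Tendsto (fun x => |x - a|) (𝓝 a) (𝓝 0) :=
    (continuous_sub_right a).abs.tendsto' a 0 (by simp)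
  exact ((h.mul_const M).eventually_le_const (by simp)).and
    ((h.mul_const (M ^ 2)).eventually_le_const (by simpa using hε))

theorem EReal.tendsto_coe_of_eventually_mem_Icc {α : Type*} {l : Filter α} {f : α → EReal}
    {a : ℝ} (h : ∀ ε > 0, ∀ᶠ x in l, f x ∈ Set.Icc ((a - ε : ℝ) : EReal) ((a + ε : ℝ) : EReal)) :
    Tendsto f l (𝓝 (a : EReal)) := by
  refine tendsto_order.2 ⟨fun b hb => ?_, fun b hb => ?_⟩
  · obtain ⟨r, hbr, hra⟩ := EReal.lt_iff_exists_real_btwn.1 hb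
    have hra : r < a := EReal.coe_lt_coe_iff.1 hra
    filter_upwards [h (a - r) (by linarith)] with x hx
    exact hbr.trans_le (le_of_eq_of_le (by norm_num) hx.1)
  · obtain ⟨r, har, hrb⟩ := EReal.lt_iff_exists_real_btwn.1 hb
    have har : a < r := EReal.coe_lt_coe_iff.1 har
    filter_upwards [h (r - a) (by linarith)] with x hx
    exact (hx.2.trans_eq (by norm_num)).trans_lt hrb

section Divergences

variable {Z : Type*} [Fintype Z] {P q q' : Z → ℝ≥0∞} {α : ℝ}

theorem le_one_of_sum_eq_one (hP : ∑ z, P z = 1) (z : Z) : P z ≤ 1 :=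
  hP ▸ Finset.single_le_sum (fun _ _ => zero_le) (Finset.mem_univ z)

theorem ne_top_of_sum_eq_one (hP : ∑ z, P z = 1) (z : Z) : P z ≠ ⊤ :=
  ne_top_of_le_ne_top ENNReal.one_ne_top (le_one_of_sum_eq_one hP z)

theorem toReal_le_one_of_sum_eq_one (hP : ∑ z, P z = 1) (z : Z) : (P z).toReal ≤ 1 :=
  ENNReal.toReal_le_of_le_ofReal zero_le_one (by simpa using le_one_of_sum_eq_one hP z)

theorem sum_toReal_of_sum_eq_one (hP : ∑ z, P z = 1) : ∑ z, (P z).toReal = 1 := by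
  rw [← ENNReal.toReal_sum fun z _ => ne_top_of_sum_eq_one hP z, hP, ENNReal.toReal_one]

/-- The log-likelihood ratio; `klDiv P q` is its `P`-expectation when `P ≪ q`. -/
noncomputable def llr (P q : Z → ℝ≥0∞) (z : Z) : ℝ :=
  Real.log ((P z).toReal / (q z).toReal)

noncomputable def renyiSum (α : ℝ) (P q : Z → ℝ≥0∞) : ℝ≥0∞ :=
  ∑ z, P z ^ α * q z ^ (1 - α)

theorem klDiv_of_ac (hac : ∀ z, q z = 0 → P z = 0) :
    klDiv P q = ((∑ z, (P z).toReal * llr P q z : ℝ) : EReal) := by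
  rw [klDiv, if_pos hac]; rfl

theorem renyiDiv_of_ne_one (hα : α ≠ 1) :
    renyiDiv α P q = (((α - 1)⁻¹ : ℝ) : EReal) * ENNReal.log (renyiSum α P q) :=
  if_neg hα

theorem renyiDiv_of_toReal_pos (hα : α ≠ 1) (h : 0 < (renyiSum α P q).toReal) :
    renyiDiv α P q = (((α - 1)⁻¹ * Real.log (renyiSum α P q).toReal : ℝ) : EReal) := by
  rw [renyiDiv_of_ne_one hα, ENNReal.log_pos_real' h, EReal.coe_mul]

theorem renyiDiv_eq_top_of_one_lt (hα : 1 < α) (h : renyiSum α P q = ⊤) :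
    renyiDiv α P q = ⊤ := by
  rw [renyiDiv_of_ne_one hα.ne', h, ENNReal.log_top,
    EReal.coe_mul_top_of_pos (inv_pos.2 (sub_pos.2 hα))]

theorem renyiDiv_eq_top_of_lt_one (hα : α < 1) (h : renyiSum α P q = 0) :
    renyiDiv α P q = ⊤ := by
  rw [renyiDiv_of_ne_one hα.ne, h, ENNReal.log_zero,
    EReal.coe_mul_bot_of_neg (inv_lt_zero.2 (sub_neg.2 hα))]

theorem toReal_rpow_mul_rpow_one_sub {a b : ℝ≥0∞} (ha : a ≠ ⊤) (hb : b ≠ ⊤) (hab : b = 0 → a = 0)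
    (hα : 0 < α) :
    (a ^ α * b ^ (1 - α)).toReal =
      a.toReal * Real.exp ((α - 1) * Real.log (a.toReal / b.toReal)) := by
  rcases eq_or_ne a 0 with rfl | ha0
  · simp [ENNReal.zero_rpow_of_pos hα]
  have ha' : 0 < a.toReal := ENNReal.toReal_pos ha0 ha
  have hb' : 0 < b.toReal := ENNReal.toReal_pos (mt hab ha0) hb
  rw [ENNReal.toReal_mul, ← ENNReal.toReal_rpow, ← ENNReal.toReal_rpow,
    Real.rpow_def_of_pos ha', Real.rpow_def_of_pos hb', Real.log_div ha'.ne' hb'.ne',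
    ← Real.exp_add]
  nth_rewrite 2 [← Real.exp_log ha']
  rw [← Real.exp_add]
  ring_nf

theorem toReal_renyiSum_of_ac (hP : ∀ z, P z ≠ ⊤) (hq : ∀ z, q z ≠ ⊤)
    (hac : ∀ z, q z = 0 → P z = 0) (hα : 0 < α) :
    (renyiSum α P q).toReal = ∑ z, (P z).toReal * Real.exp ((α - 1) * llr P q z) := by
  have hterm : ∀ z, P z ^ α * q z ^ (1 - α) ≠ ⊤ := fun z => by
    rcases eq_or_ne (P z) 0 with h | h
    · simp [h, ENNReal.zero_rpow_of_pos hα]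
    exact ENNReal.mul_ne_top (ENNReal.rpow_ne_top_of_nonneg hα.le (hP z))
      (by simp [ENNReal.rpow_eq_top_iff, hq z, mt (hac z) h])
  rw [renyiSum, ENNReal.toReal_sum fun z _ => hterm z]
  exact Finset.sum_congr rfl fun z _ => toReal_rpow_mul_rpow_one_sub (hP z) (hq z) (hac z) hα

theorem renyiDiv_of_ac (hP : ∑ z, P z = 1) (hq : ∀ z, q z ≠ ⊤) (hac : ∀ z, q z = 0 → P z = 0)
    (hα0 : 0 < α) (hα1 : α ≠ 1) :
    renyiDiv α P q = (((α - 1)⁻¹ *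
      Real.log (∑ z, (P z).toReal * Real.exp ((α - 1) * llr P q z)) : ℝ) : EReal) := by
  have h := toReal_renyiSum_of_ac (ne_top_of_sum_eq_one hP) hq hac hα0
  rw [renyiDiv_of_toReal_pos hα1 (h ▸ sum_mul_exp_pos (fun _ => ENNReal.toReal_nonneg)
    (sum_toReal_of_sum_eq_one hP) _), h]

theorem le_renyiDiv_of_mul_le (hα : α < 1) {b : ℝ≥0∞} (hb0 : b ≠ 0) (hbt : b ≠ ⊤)
    (hle : ∀ z, b * q z ≤ q' z) (hS' : 0 < (renyiSum α P q').toReal) :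
    (((α - 1)⁻¹ * Real.log (renyiSum α P q').toReal + Real.log b.toReal : ℝ) : EReal) ≤
      renyiDiv α P q := by
  have h1α : 0 < 1 - α := sub_pos.2 hα
  have hmono : b ^ (1 - α) * renyiSum α P q ≤ renyiSum α P q' := by
    rw [renyiSum, renyiSum, Finset.mul_sum]
    refine Finset.sum_le_sum fun z _ => ?_
    calc b ^ (1 - α) * (P z ^ α * q z ^ (1 - α)) = P z ^ α * (b * q z) ^ (1 - α) := by
          rw [ENNReal.mul_rpow_of_nonneg _ _ h1α.le]; ring
      _ ≤ P z ^ α * q' z ^ (1 - α) := by gcongr; exact hle z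
  rcases eq_or_ne (renyiSum α P q) 0 with h0 | h0
  · rw [renyiDiv_eq_top_of_lt_one hα h0]; exact le_top
  have hbpos : 0 < b.toReal := ENNReal.toReal_pos hb0 hbt
  have hS'top : renyiSum α P q' ≠ ⊤ := (ENNReal.toReal_pos_iff.1 hS').2.ne
  have hStop : renyiSum α P q ≠ ⊤ := fun h => hS'top <| top_le_iff.1 <| by
    rwa [h, ENNReal.mul_top (ENNReal.rpow_pos (pos_iff_ne_zero.2 hb0) hbt).ne'] at hmono
  have hSpos : 0 < (renyiSum α P q).toReal := ENNReal.toReal_pos h0 hStop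
  have hlog : (1 - α) * Real.log b.toReal + Real.log (renyiSum α P q).toReal ≤
      Real.log (renyiSum α P q').toReal := by
    have h := ENNReal.toReal_mono hS'top hmono
    rw [ENNReal.toReal_mul, ← ENNReal.toReal_rpow] at h
    have h := Real.log_le_log (by positivity) h
    rwa [Real.log_mul (by positivity) hSpos.ne', Real.log_rpow hbpos] at h
  rw [renyiDiv_of_toReal_pos hα.ne hSpos, EReal.coe_le_coe_iff]
  calc (α - 1)⁻¹ * Real.log (renyiSum α P q').toReal + Real.log b.toReal
      ≤ (α - 1)⁻¹ * ((1 - α) * Real.log b.toReal + Real.log (renyiSum α P q).toReal) +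
          Real.log b.toReal :=
        add_le_add_left (mul_le_mul_of_nonpos_left hlog (inv_nonpos.2 (sub_nonpos.2 hα.le))) _
    _ = (α - 1)⁻¹ * Real.log (renyiSum α P q).toReal := by
        field_simp [(sub_neg.2 hα).ne]; ring

theorem renyiDiv_eq_top_of_not_ac (hα : 1 ≤ α) (hP : ∀ z, P z ≠ ⊤) {z : Z} (hq : q z = 0)
    (hPz : P z ≠ 0) : renyiDiv α P q = ⊤ := by
  rcases hα.eq_or_lt with rfl | hα
  · rw [renyiDiv, if_pos rfl, klDiv, if_neg fun hac => hPz (hac z hq)]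
  refine renyiDiv_eq_top_of_one_lt hα (ENNReal.sum_eq_top.2 ⟨z, Finset.mem_univ _, ?_⟩)
  rw [hq, ENNReal.zero_rpow_of_neg (by linarith)]
  exact ENNReal.mul_top (ENNReal.rpow_pos (pos_iff_ne_zero.2 hPz) (hP z)).ne'

theorem sum_mul_llr_nonneg (hP : ∑ z, P z = 1) (hq : ∑ z, q z = 1)
    (hac : ∀ z, q z = 0 → P z = 0) : 0 ≤ ∑ z, (P z).toReal * llr P q z := by
  refine sum_mul_log_div_nonneg (fun _ => ENNReal.toReal_nonneg) (fun _ => ENNReal.toReal_nonneg)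
    (fun z hz => ?_) (by rw [sum_toReal_of_sum_eq_one hP, sum_toReal_of_sum_eq_one hq])
  rw [ENNReal.toReal_eq_zero_iff] at hz ⊢
  exact Or.inl (hac z (hz.resolve_right (ne_top_of_sum_eq_one hq z)))

end Divergences

section Mixture

variable {Z : Type*} {q m : Z → ℝ≥0∞} {s : ℝ}

noncomputable def mixture (s : ℝ) (q m : Z → ℝ≥0∞) (z : Z) : ℝ≥0∞ :=
  ENNReal.ofReal s * q z + ENNReal.ofReal (1 - s) * m z

theorem sum_mixture [Fintype Z] (hs0 : 0 ≤ s) (hs1 : s ≤ 1) (hq : ∑ z, q z = 1)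
    (hm : ∑ z, m z = 1) : ∑ z, mixture s q m z = 1 := by
  simp only [mixture, Finset.sum_add_distrib, ← Finset.mul_sum, hq, hm, mul_one]
  rw [← ENNReal.ofReal_add hs0 (sub_nonneg.2 hs1), add_sub_cancel, ENNReal.ofReal_one]

theorem mul_toReal_le_toReal_mixture (hs1 : s ≤ 1) {z : Z}
    (h : mixture s q m z ≠ ⊤) : (1 - s) * (m z).toReal ≤ (mixture s q m z).toReal := by
  rw [← ENNReal.toReal_ofReal (sub_nonneg.2 hs1), ← ENNReal.toReal_mul]
  exact ENNReal.toReal_mono h le_add_self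

theorem mixture_ne_zero (hs1 : s < 1) {z : Z} (hm : m z ≠ 0) :
    mixture s q m z ≠ 0 :=
  (pos_iff_ne_zero.2 (mul_ne_zero (ENNReal.ofReal_pos.2 (sub_pos.2 hs1)).ne' hm)).trans_le
    le_add_self |>.ne'

end Mixture

section Product

variable {X Y : Type*} [Fintype X] [Fintype Y] {P : X × Y → ℝ≥0∞}

theorem sum_margX (hP : ∑ z, P z = 1) : ∑ x, margX P x = 1 := by
  rw [← hP, Fintype.sum_prod_type]; rfl

theorem sum_margY (hP : ∑ z, P z = 1) : ∑ y, margY P y = 1 := by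
  rw [← hP, Fintype.sum_prod_type_right]; rfl

theorem le_margX (z : X × Y) : P z ≤ margX P z.1 :=
  Finset.single_le_sum (f := fun y => P (z.1, y)) (fun _ _ => zero_le) (Finset.mem_univ z.2)

theorem le_margY (z : X × Y) : P z ≤ margY P z.2 :=
  Finset.single_le_sum (f := fun x => P (x, z.2)) (fun _ _ => zero_le) (Finset.mem_univ z.1)

theorem eq_zero_of_margX_mul_margY_eq_zero (z : X × Y) (h : margX P z.1 * margY P z.2 = 0) :
    P z = 0 := by
  rcases mul_eq_zero.1 h with h | h
  · exact le_antisymm (h ▸ le_margX z) zero_le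
  · exact le_antisymm (h ▸ le_margY z) zero_le

noncomputable def mutualInfoReal (P : X × Y → ℝ≥0∞) : ℝ :=
  ∑ z, (P z).toReal * llr P (fun z => margX P z.1 * margY P z.2) z

theorem mutualInfo_eq_mutualInfoReal : mutualInfo P = mutualInfoReal P :=
  klDiv_of_ac eq_zero_of_margX_mul_margY_eq_zero

theorem sum_toReal_mul_fst (hP : ∀ z, P z ≠ ⊤) (f : X → ℝ) :
    ∑ z, (P z).toReal * f z.1 = ∑ x, (margX P x).toReal * f x := by
  rw [Fintype.sum_prod_type]
  refine Finset.sum_congr rfl fun x _ => ?_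
  rw [margX, ENNReal.toReal_sum fun y _ => hP _, Finset.sum_mul]

theorem sum_toReal_mul_snd (hP : ∀ z, P z ≠ ⊤) (f : Y → ℝ) :
    ∑ z, (P z).toReal * f z.2 = ∑ y, (margY P y).toReal * f y := by
  rw [Fintype.sum_prod_type_right]
  refine Finset.sum_congr rfl fun y _ => ?_
  rw [margY, ENNReal.toReal_sum fun x _ => hP _, Finset.sum_mul]

theorem sum_mul_llr_prod {q₁ : X → ℝ≥0∞} {q₂ : Y → ℝ≥0∞} (hP : ∑ z, P z = 1)
    (hq₁ : ∀ x, q₁ x ≠ ⊤) (hq₂ : ∀ y, q₂ y ≠ ⊤) (hac : ∀ z, q₁ z.1 * q₂ z.2 = 0 → P z = 0) :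
    ∑ z, (P z).toReal * llr P (fun z => q₁ z.1 * q₂ z.2) z =
      mutualInfoReal P + ∑ x, (margX P x).toReal * llr (margX P) q₁ x +
        ∑ y, (margY P y).toReal * llr (margY P) q₂ y := by
  have hPt := ne_top_of_sum_eq_one hP
  rw [mutualInfoReal, ← sum_toReal_mul_fst hPt, ← sum_toReal_mul_snd hPt,
    ← Finset.sum_add_distrib, ← Finset.sum_add_distrib]
  refine Finset.sum_congr rfl fun z _ => ?_
  rcases eq_or_ne (P z) 0 with h | h
  · simp [h]
  have hq : q₁ z.1 * q₂ z.2 ≠ 0 := mt (hac z) h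
  have hm : margX P z.1 * margY P z.2 ≠ 0 := mt (eq_zero_of_margX_mul_margY_eq_zero z) h
  have hp : 0 < (P z).toReal := ENNReal.toReal_pos h (hPt z)
  have hx : 0 < (margX P z.1).toReal :=
    ENNReal.toReal_pos (left_ne_zero_of_mul hm) (ne_top_of_sum_eq_one (sum_margX hP) _)
  have hy : 0 < (margY P z.2).toReal :=
    ENNReal.toReal_pos (right_ne_zero_of_mul hm) (ne_top_of_sum_eq_one (sum_margY hP) _)
  have h₁ : 0 < (q₁ z.1).toReal := ENNReal.toReal_pos (left_ne_zero_of_mul hq) (hq₁ _)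
  have h₂ : 0 < (q₂ z.2).toReal := ENNReal.toReal_pos (right_ne_zero_of_mul hq) (hq₂ _)
  simp only [llr, ENNReal.toReal_mul]
  rw [Real.log_div hp.ne' (by positivity), Real.log_div hp.ne' (by positivity),
    Real.log_div hx.ne' h₁.ne', Real.log_div hy.ne' h₂.ne', Real.log_mul h₁.ne' h₂.ne',
    Real.log_mul hx.ne' hy.ne']
  ring

theorem mutualInfoReal_le_sum_mul_llr {q₁ : X → ℝ≥0∞} {q₂ : Y → ℝ≥0∞} (hP : ∑ z, P z = 1)
    (hq₁ : ∑ x, q₁ x = 1) (hq₂ : ∑ y, q₂ y = 1) (hac : ∀ z, q₁ z.1 * q₂ z.2 = 0 → P z = 0) :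
    mutualInfoReal P ≤ ∑ z, (P z).toReal * llr P (fun z => q₁ z.1 * q₂ z.2) z := by
  rw [sum_mul_llr_prod hP (ne_top_of_sum_eq_one hq₁) (ne_top_of_sum_eq_one hq₂) hac]
  have h₁ := sum_mul_llr_nonneg (sum_margX hP) hq₁ fun x hx =>
    Finset.sum_eq_zero fun y _ => hac (x, y) (by simp [hx])
  have h₂ := sum_mul_llr_nonneg (sum_margY hP) hq₂ fun y hy =>
    Finset.sum_eq_zero fun x _ => hac (x, y) (by simp [hy])
  linarith

end Product

section DependenceMeasure

variable {X Y : Type*} [Fintype X] [Fintype Y] {P : X × Y → ℝ≥0∞}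

theorem mutualInfo_le_renyiDiv {α : ℝ} {q₁ : X → ℝ≥0∞} {q₂ : Y → ℝ≥0∞} (hP : ∑ z, P z = 1)
    (hq₁ : ∑ x, q₁ x = 1) (hq₂ : ∑ y, q₂ y = 1) (hα : 1 ≤ α) :
    mutualInfo P ≤ renyiDiv α P (fun z => q₁ z.1 * q₂ z.2) := by
  by_cases hac : ∀ z, q₁ z.1 * q₂ z.2 = 0 → P z = 0
  · have hI := mutualInfoReal_le_sum_mul_llr hP hq₁ hq₂ hac
    rw [mutualInfo_eq_mutualInfoReal]
    rcases hα.eq_or_lt with rfl | hα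
    · rw [renyiDiv, if_pos rfl, klDiv_of_ac hac]
      exact EReal.coe_le_coe_iff.2 hI
    rw [renyiDiv_of_ac hP (fun z => ENNReal.mul_ne_top (ne_top_of_sum_eq_one hq₁ _)
      (ne_top_of_sum_eq_one hq₂ _)) hac (by linarith) hα.ne', EReal.coe_le_coe_iff,
      le_inv_mul_iff₀ (sub_pos.2 hα)]
    exact (mul_le_mul_of_nonneg_left hI (sub_pos.2 hα).le).trans
      (mul_sum_le_log_sum_mul_exp (fun _ => ENNReal.toReal_nonneg)
        (sum_toReal_of_sum_eq_one hP) _)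
  · push Not at hac
    obtain ⟨z, hq, hPz⟩ := hac
    rw [renyiDiv_eq_top_of_not_ac hα (ne_top_of_sum_eq_one hP) hq hPz]
    exact le_top

theorem Jalpha_le_renyiDiv_margX_mul_margY (hP : ∑ z, P z = 1) (α : ℝ) :
    Jalpha α P ≤ renyiDiv α P (fun z => margX P z.1 * margY P z.2) :=
  iInf_le_of_le (⟨margX P, sum_margX hP⟩, ⟨margY P, sum_margY hP⟩) le_rfl

theorem Jalpha_one (hP : ∑ z, P z = 1) : Jalpha 1 P = mutualInfo P :=
  le_antisymm ((Jalpha_le_renyiDiv_margX_mul_margY hP 1).trans_eq (if_pos rfl))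
    (le_iInf fun Q => mutualInfo_le_renyiDiv hP Q.1.2 Q.2.2 le_rfl)

theorem abs_llr_prod_le {q₁ : X → ℝ≥0∞} {q₂ : Y → ℝ≥0∞} (hP : ∑ z, P z = 1)
    (hq₁ : ∑ x, q₁ x = 1) (hq₂ : ∑ y, q₂ y = 1) {a : ℝ} (ha0 : 0 < a) (ha1 : a ≤ 1)
    (h₁ : ∀ x, a * (margX P x).toReal ≤ (q₁ x).toReal)
    (h₂ : ∀ y, a * (margY P y).toReal ≤ (q₂ y).toReal) {z : X × Y} (hz : P z ≠ 0) :
    |llr P (fun z => q₁ z.1 * q₂ z.2) z| ≤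
      -2 * Real.log a - 2 * ∑ z, Real.log (P z).toReal := by
  have hp : 0 < (P z).toReal := ENNReal.toReal_pos hz (ne_top_of_sum_eq_one hP z)
  have hx : (P z).toReal ≤ (margX P z.1).toReal :=
    ENNReal.toReal_mono (ne_top_of_sum_eq_one (sum_margX hP) _) (le_margX z)
  have hy : (P z).toReal ≤ (margY P z.2).toReal :=
    ENNReal.toReal_mono (ne_top_of_sum_eq_one (sum_margY hP) _) (le_margY z)
  have hq : a ^ 2 * (P z).toReal ^ 2 ≤ (q₁ z.1).toReal * (q₂ z.2).toReal :=
    calc a ^ 2 * (P z).toReal ^ 2 = (a * (P z).toReal) * (a * (P z).toReal) := by ring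
      _ ≤ (a * (margX P z.1).toReal) * (a * (margY P z.2).toReal) := by gcongr
      _ ≤ _ := mul_le_mul (h₁ _) (h₂ _) (by positivity) ENNReal.toReal_nonneg
  have hq_le_one : (q₁ z.1).toReal * (q₂ z.2).toReal ≤ 1 :=
    mul_le_one₀ (toReal_le_one_of_sum_eq_one hq₁ _) ENNReal.toReal_nonneg
      (toReal_le_one_of_sum_eq_one hq₂ _)
  have hlog : ∀ z, Real.log (P z).toReal ≤ 0 := fun z =>
    Real.log_nonpos ENNReal.toReal_nonneg (toReal_le_one_of_sum_eq_one hP z)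
  have hsum : ∑ z, Real.log (P z).toReal ≤ Real.log (P z).toReal := by
    simpa using Finset.sum_le_sum_of_subset_of_nonpos' (Finset.subset_univ {z})
      fun z' _ _ => hlog z'
  have hbound := abs_log_div_le (by positivity) (pow_le_one₀ ha0.le ha1) hp
    (toReal_le_one_of_sum_eq_one hP z) hq_le_one hq
  rw [Real.log_pow, Nat.cast_ofNat] at hbound
  simp only [llr, ENNReal.toReal_mul]
  linarith

theorem eventually_renyiDiv_margX_mul_margY_le (hP : ∑ z, P z = 1) {ε : ℝ} (hε : 0 < ε) :
    ∀ᶠ α in 𝓝 1, 0 < α →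
      renyiDiv α P (fun z => margX P z.1 * margY P z.2) ≤ ((mutualInfoReal P + ε : ℝ) : EReal) := by
  filter_upwards [eventually_abs_sub_mul_le 1 (-2 * ∑ z, Real.log (P z).toReal) ε hε]
    with α ⟨hM, hMε⟩ hα0
  rcases eq_or_ne α 1 with rfl | hα1
  · rw [renyiDiv, if_pos rfl, ← mutualInfo, mutualInfo_eq_mutualInfoReal, EReal.coe_le_coe_iff]
    linarith
  have hL : ∀ z, (P z).toReal ≠ 0 → |llr P (fun z => margX P z.1 * margY P z.2) z| ≤
      -2 * ∑ z, Real.log (P z).toReal := fun z hz => by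
    simpa using abs_llr_prod_le hP (sum_margX hP) (sum_margY hP) one_pos le_rfl
      (fun x => (one_mul _).le) (fun y => (one_mul _).le) (ENNReal.toReal_ne_zero.1 hz).1
  have hR := abs_inv_mul_log_sum_mul_exp_sub_le (fun _ => ENNReal.toReal_nonneg)
    (sum_toReal_of_sum_eq_one hP) hL (sub_ne_zero.2 hα1) hM
  rw [renyiDiv_of_ac hP (fun z => ENNReal.mul_ne_top (ne_top_of_sum_eq_one (sum_margX hP) _)
    (ne_top_of_sum_eq_one (sum_margY hP) _)) eq_zero_of_margX_mul_margY_eq_zero hα0 hα1,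
    EReal.coe_le_coe_iff, mutualInfoReal]
  linarith [(abs_le.1 hR).2]

theorem le_renyiDiv_of_lt_one {α s : ℝ} {q₁ : X → ℝ≥0∞} {q₂ : Y → ℝ≥0∞} (hP : ∑ z, P z = 1)
    (hq₁ : ∑ x, q₁ x = 1) (hq₂ : ∑ y, q₂ y = 1) (hs0 : 0 < s) (hs1 : s < 1) (hα0 : 0 < α)
    (hα1 : α < 1)
    (hM : |α - 1| * (-2 * Real.log (1 - s) - 2 * ∑ z, Real.log (P z).toReal) ≤ 1) :
    ((mutualInfoReal P - |α - 1| * (-2 * Real.log (1 - s) - 2 * ∑ z, Real.log (P z).toReal) ^ 2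
      + 2 * Real.log s : ℝ) : EReal) ≤ renyiDiv α P (fun z => q₁ z.1 * q₂ z.2) := by
  set r₁ := mixture s q₁ (margX P)
  set r₂ := mixture s q₂ (margY P)
  have hr₁ : ∑ x, r₁ x = 1 := sum_mixture hs0.le hs1.le hq₁ (sum_margX hP)
  have hr₂ : ∑ y, r₂ y = 1 := sum_mixture hs0.le hs1.le hq₂ (sum_margY hP)
  have hac : ∀ z, r₁ z.1 * r₂ z.2 = 0 → P z = 0 := fun z h => by
    by_contra hz
    have hPz := pos_iff_ne_zero.2 hz
    exact mul_ne_zero (mixture_ne_zero hs1 (hPz.trans_le (le_margX z)).ne')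
      (mixture_ne_zero hs1 (hPz.trans_le (le_margY z)).ne') h
  have hL := fun z (hz : (P z).toReal ≠ 0) => abs_llr_prod_le hP hr₁ hr₂ (sub_pos.2 hs1)
    (by linarith) (fun x => mul_toReal_le_toReal_mixture hs1.le (ne_top_of_sum_eq_one hr₁ x))
    (fun y => mul_toReal_le_toReal_mixture hs1.le (ne_top_of_sum_eq_one hr₂ y))
    (ENNReal.toReal_ne_zero.1 hz).1
  have hR := abs_inv_mul_log_sum_mul_exp_sub_le (fun _ => ENNReal.toReal_nonneg)
    (sum_toReal_of_sum_eq_one hP) hL (sub_ne_zero.2 hα1.ne) hM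
  have hI := mutualInfoReal_le_sum_mul_llr hP hr₁ hr₂ hac
  have hS := toReal_renyiSum_of_ac (α := α) (ne_top_of_sum_eq_one hP)
    (fun z => ENNReal.mul_ne_top (ne_top_of_sum_eq_one hr₁ _) (ne_top_of_sum_eq_one hr₂ _))
    hac hα0
  have hle : ∀ z : X × Y, ENNReal.ofReal s ^ 2 * (q₁ z.1 * q₂ z.2) ≤ r₁ z.1 * r₂ z.2 := fun z =>
    calc ENNReal.ofReal s ^ 2 * (q₁ z.1 * q₂ z.2)
        = (ENNReal.ofReal s * q₁ z.1) * (ENNReal.ofReal s * q₂ z.2) := by ring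
      _ ≤ r₁ z.1 * r₂ z.2 := mul_le_mul' le_self_add le_self_add
  have hcmp := le_renyiDiv_of_mul_le hα1 (pow_ne_zero 2 (ENNReal.ofReal_pos.2 hs0).ne')
    (ENNReal.pow_ne_top ENNReal.ofReal_ne_top) hle
    (hS ▸ sum_mul_exp_pos (fun _ => ENNReal.toReal_nonneg) (sum_toReal_of_sum_eq_one hP) _)
  rw [hS, ENNReal.toReal_pow, ENNReal.toReal_ofReal hs0.le, Real.log_pow, Nat.cast_ofNat] at hcmp
  refine le_trans (EReal.coe_le_coe_iff.2 ?_) hcmp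
  linarith [(abs_le.1 hR).1]

theorem eventually_le_renyiDiv_of_lt_one (hP : ∑ z, P z = 1) {ε : ℝ} (hε : 0 < ε) :
    ∀ᶠ α in 𝓝 1, 0 < α → α < 1 → ∀ (q₁ : X → ℝ≥0∞) (q₂ : Y → ℝ≥0∞),
      ∑ x, q₁ x = 1 → ∑ y, q₂ y = 1 →
        ((mutualInfoReal P - ε : ℝ) : EReal) ≤ renyiDiv α P (fun z => q₁ z.1 * q₂ z.2) := by
  set s := Real.exp (-(ε / 4))
  have hs1 : s < 1 := Real.exp_lt_one_iff.2 (by linarith)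
  filter_upwards [eventually_abs_sub_mul_le 1
    (-2 * Real.log (1 - s) - 2 * ∑ z, Real.log (P z).toReal) (ε / 2) (by linarith)]
    with α ⟨hM, hMε⟩ hα0 hα1 q₁ q₂ hq₁ hq₂
  refine le_trans (EReal.coe_le_coe_iff.2 ?_)
    (le_renyiDiv_of_lt_one hP hq₁ hq₂ (Real.exp_pos _) hs1 hα0 hα1 hM)
  rw [Real.log_exp]
  linarith

end DependenceMeasure

/-- `J_1(X;Y) = I(X;Y)` and `J_α(X;Y) → I(X;Y)` as `α → 1`
(within the domain `(0, ∞)`). -/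
theorem stmt9 {X Y : Type*} [Fintype X] [Fintype Y] (P : X × Y → ℝ≥0∞)
    (hP : ∑ p, P p = 1) :
    Jalpha 1 P = mutualInfo P ∧
    Filter.Tendsto (fun α : ℝ => Jalpha α P) (nhdsWithin 1 (Set.Ioi (0 : ℝ)))
      (nhds (mutualInfo P)) := by
  refine ⟨Jalpha_one hP, ?_⟩
  rw [mutualInfo_eq_mutualInfoReal]
  refine EReal.tendsto_coe_of_eventually_mem_Icc fun ε hε => ?_
  filter_upwards [nhdsWithin_le_nhds (eventually_renyiDiv_margX_mul_margY_le hP hε),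
    nhdsWithin_le_nhds (eventually_le_renyiDiv_of_lt_one hP hε), self_mem_nhdsWithin]
    with α hupper hlower (hα0 : 0 < α)
  refine ⟨le_iInf fun Q => ?_, (Jalpha_le_renyiDiv_margX_mul_margY hP α).trans (hupper hα0)⟩
  rcases lt_or_ge α 1 with hα1 | hα1
  · exact hlower hα0 hα1 _ _ Q.1.2 Q.2.2
  calc ((mutualInfoReal P - ε : ℝ) : EReal) ≤ mutualInfoReal P :=
        EReal.coe_le_coe_iff.2 (by linarith)
    _ = mutualInfo P := mutualInfo_eq_mutualInfoReal.symm
    _ ≤ _ := mutualInfo_le_renyiDiv hP Q.1.2 Q.2.2 hα1
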